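/- arXiv:2505.05249 — 2 statements merged into one kernel-verified Lean document; each statement's English description precedes it below -/
import Mathlib

section
/- (Theorem 2, per-iteration inequality.) Let θ, s : ℕ → E and η, ε : ℕ → ℝ satisfy θ (t+1) = θ t − η t • s t, 0 ≤ η t, 0 ≤ ε t, and ‖s t − g (θ t)‖ ≤ ε t for all t. Then for every t, L (θ (t+1)) ≤ L (θ t) − η t * ‖g (θ t)‖^2 + η t * ε t * ‖g (θ t)‖ + (C * (η t)^2 / 2) * (‖g (θ t)‖ + ε t)^2. -/
/-!
By the descent lemma, a `C`-Lipschitz gradient gives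
`L (x + v) ≤ L x + ⟪g x, v⟫ + C / 2 * ‖v‖ ^ 2`. For the step `v = -η • s` with
`‖s - g x‖ ≤ ε`, Cauchy–Schwarz gives `⟪g x, s⟫ ≥ ‖g x‖ ^ 2 - ε * ‖g x‖` and the triangle
inequality gives `‖s‖ ≤ ‖g x‖ + ε`.
-/

open InnerProductSpace

section

variable {E : Type*} [NormedAddCommGroup E] [InnerProductSpace ℝ E]

theorem HasGradientAt.hasDerivAt_comp_add_smul [CompleteSpace E] {L : E → ℝ} {g x v : E} {t : ℝ}
    (h : HasGradientAt L g (x + t • v)) :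
    HasDerivAt (fun t : ℝ => L (x + t • v)) ⟪g, v⟫_ℝ t := by
  have hline : HasDerivAt (fun t : ℝ => x + t • v) v t := by
    simpa using ((hasDerivAt_id t).smul_const v).const_add x
  exact h.hasFDerivAt.comp_hasDerivAt t hline

theorem LipschitzWith.inner_sub_le {g : E → E} {C : NNReal} (hg : LipschitzWith C g)
    (x v : E) {t : ℝ} (ht : 0 ≤ t) :
    ⟪g (x + t • v) - g x, v⟫_ℝ ≤ C * t * ‖v‖ ^ 2 :=
  calc ⟪g (x + t • v) - g x, v⟫_ℝ ≤ ‖g (x + t • v) - g x‖ * ‖v‖ := real_inner_le_norm _ _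
    _ ≤ C * ‖t • v‖ * ‖v‖ := by
        gcongr
        simpa using hg.norm_sub_le (x + t • v) x
    _ = C * t * ‖v‖ ^ 2 := by rw [norm_smul, Real.norm_of_nonneg ht]; ring

/-- The descent lemma: along `t ↦ x + t • v` the slope of `L` exceeds its value at `t = 0` by at
most `C * t * ‖v‖ ^ 2`, so `L` stays below its quadratic model on `[0, 1]`. -/
theorem le_add_inner_add_of_lipschitzWith_gradient [CompleteSpace E] {L : E → ℝ} {g : E → E}
    (hL : ∀ x, HasGradientAt L (g x) x) {C : NNReal} (hg : LipschitzWith C g) (x v : E) :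
    L (x + v) ≤ L x + ⟪g x, v⟫_ℝ + C / 2 * ‖v‖ ^ 2 := by
  have hf : ∀ t : ℝ, HasDerivAt (fun t : ℝ => L (x + t • v)) ⟪g (x + t • v), v⟫_ℝ t :=
    fun t => (hL _).hasDerivAt_comp_add_smul
  have hB : ∀ t : ℝ, HasDerivAt (fun t : ℝ => L x + t * ⟪g x, v⟫_ℝ + C / 2 * t ^ 2 * ‖v‖ ^ 2)
      (⟪g x, v⟫_ℝ + C * t * ‖v‖ ^ 2) t := fun t => by
    refine ((((hasDerivAt_id' t).mul_const ⟪g x, v⟫_ℝ).const_add (L x)).add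
      (((hasDerivAt_pow 2 t).const_mul ((C : ℝ) / 2)).mul_const (‖v‖ ^ 2))).congr_deriv ?_
    push_cast
    ring
  have key := image_le_of_deriv_right_le_deriv_boundary
    (fun t _ => (hf t).continuousAt.continuousWithinAt) (fun t _ => (hf t).hasDerivWithinAt)
    (by simp) (fun t _ => (hB t).continuousAt.continuousWithinAt)
    (fun t _ => (hB t).hasDerivWithinAt)
    (fun t ht => by
      have := hg.inner_sub_le x v ht.1
      rw [inner_sub_left] at this
      linarith)
    (Set.right_mem_Icc.2 zero_le_one)
  simpa using key

theorem le_sub_smul_of_norm_sub_gradient_le [CompleteSpace E] {L : E → ℝ} {g : E → E}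
    (hL : ∀ x, HasGradientAt L (g x) x) {C : NNReal} (hg : LipschitzWith C g) (x s : E)
    {η ε : ℝ} (hη : 0 ≤ η) (hs : ‖s - g x‖ ≤ ε) :
    L (x - η • s) ≤
      L x - η * ‖g x‖ ^ 2 + η * ε * ‖g x‖ + (C * η ^ 2 / 2) * (‖g x‖ + ε) ^ 2 := by
  have hdesc := le_add_inner_add_of_lipschitzWith_gradient hL hg x (-(η • s))
  rw [← sub_eq_add_neg, inner_neg_right, inner_smul_right, norm_neg, norm_smul,
    Real.norm_of_nonneg hη] at hdesc
  have hinner : ‖g x‖ ^ 2 - ε * ‖g x‖ ≤ ⟪g x, s⟫_ℝ := by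
    have hcs := neg_le_of_abs_le (abs_real_inner_le_norm (g x) (s - g x))
    rw [inner_sub_right, real_inner_self_eq_norm_sq] at hcs
    linarith [mul_le_mul_of_nonneg_left hs (norm_nonneg (g x))]
  have hnorm : (η * ‖s‖) ^ 2 ≤ η ^ 2 * (‖g x‖ + ε) ^ 2 := by
    rw [← mul_pow]
    gcongr
    linarith [norm_le_norm_add_norm_sub' s (g x)]
  have hC : (0 : ℝ) ≤ C := C.2
  linarith [mul_le_mul_of_nonneg_left hinner hη, mul_le_mul_of_nonneg_left hnorm hC]

end

theorem surrogate_per_iteration_general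
    {E : Type*} [NormedAddCommGroup E] [InnerProductSpace ℝ E] [CompleteSpace E]
    (L : E → ℝ) (g : E → E) (hg : ∀ x : E, HasGradientAt L (g x) x)
    (C : NNReal) (hLip : LipschitzWith C g)
    (θ s : ℕ → E) (η ε : ℕ → ℝ)
    (hθ : ∀ t : ℕ, θ (t + 1) = θ t - η t • s t)
    (hη : ∀ t : ℕ, 0 ≤ η t)
    (hs : ∀ t : ℕ, ‖s t - g (θ t)‖ ≤ ε t) :
    ∀ t : ℕ,
      L (θ (t + 1)) ≤
        L (θ t) - η t * ‖g (θ t)‖ ^ 2 + η t * ε t * ‖g (θ t)‖ +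
          ((C : ℝ) * (η t) ^ 2 / 2) * (‖g (θ t)‖ + ε t) ^ 2 := fun t =>
  hθ t ▸ le_sub_smul_of_norm_sub_gradient_le hg hLip (θ t) (s t) (hη t) (hs t)

/-- Theorem 2, per-iteration inequality. -/
theorem surrogate_per_iteration
    {E : Type*} [NormedAddCommGroup E] [InnerProductSpace ℝ E] [CompleteSpace E]
    (L : E → ℝ) (g : E → E) (hg : ∀ x : E, HasGradientAt L (g x) x)
    (C : NNReal) (hLip : LipschitzWith C g)
    (θ s : ℕ → E) (η ε : ℕ → ℝ)
    (hθ : ∀ t : ℕ, θ (t + 1) = θ t - η t • s t)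
    (hη : ∀ t : ℕ, 0 ≤ η t) (hε : ∀ t : ℕ, 0 ≤ ε t)
    (hs : ∀ t : ℕ, ‖s t - g (θ t)‖ ≤ ε t) :
    ∀ t : ℕ,
      L (θ (t + 1)) ≤
        L (θ t) - η t * ‖g (θ t)‖ ^ 2 + η t * ε t * ‖g (θ t)‖ +
          ((C : ℝ) * (η t) ^ 2 / 2) * (‖g (θ t)‖ + ε t) ^ 2 :=
  surrogate_per_iteration_general L g hg C hLip θ s η ε hθ hη hs
end

section
/- (Theorem 2, monotone decrease and convergence of the loss.) Suppose C > 0 and L is bounded below: B ≤ L x for all x ∈ E. Let θ, s : ℕ → E and η, ε : ℕ → ℝ satisfy, for all t: θ (t+1) = θ t − η t • s t; ‖s t − g (θ t)‖ ≤ ε t; 0 ≤ ε t ≤ ‖g (θ t)‖ / 4; and 0 ≤ η t ≤ 8 / (25 * C). Then L (θ (t+1)) ≤ L (θ t) for all t, and there exists ℓ* ∈ ℝ such that the sequence t ↦ L (θ t) tends to ℓ* as t → ∞. -/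
/-!
Along the segment `t ↦ x + t • v` the derivative of `L` moves by at most `C t ‖v‖²`, which gives
the descent inequality `L (x + v) ≤ L x + ⟪∇L x, v⟫ + C/2 ‖v‖²`. When the search direction `s` is
within `‖∇L x‖ / 4` of the gradient, `⟪∇L x, s⟫ ≥ 3/4 ‖∇L x‖²` and `‖s‖ ≤ 5/4 ‖∇L x‖`, so for
`C η ≤ 8/25` the step `x - η • s` lowers `L` by at least `η/2 ‖∇L x‖²`. The losses therefore form
an antitone sequence, bounded below by `B`, and converge to their infimum.
-/

open Set RealInnerProductSpace

lemma image_le_add_deriv_mul_add_sq_of_deriv_le {φ φ' : ℝ → ℝ} {K b : ℝ} (hb : 0 ≤ b)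
    (hφ : ∀ t, HasDerivAt φ (φ' t) t) (hφ' : ∀ t ∈ Ico 0 b, φ' t ≤ φ' 0 + K * t) :
    φ b ≤ φ 0 + φ' 0 * b + K / 2 * b ^ 2 := by
  have hquad : ∀ t, HasDerivAt (fun t => φ 0 + φ' 0 * t + K / 2 * t ^ 2) (φ' 0 + K * t) t := by
    intro t
    refine ((((hasDerivAt_id' t).const_mul (φ' 0)).const_add (φ 0)).add
      ((hasDerivAt_pow 2 t).const_mul (K / 2))).congr_deriv ?_
    norm_num
    ring
  refine image_le_of_deriv_right_le_deriv_boundary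
    (fun t _ => (hφ t).continuousAt.continuousWithinAt) (fun t _ => (hφ t).hasDerivWithinAt)
    (by simp) (fun t _ => (hquad t).continuousAt.continuousWithinAt)
    (fun t _ => (hquad t).hasDerivWithinAt) hφ' ⟨hb, le_rfl⟩

section Gradient

variable {E : Type*} [NormedAddCommGroup E] [InnerProductSpace ℝ E]

lemma sq_norm_sub_mul_le_inner_of_norm_sub_le {u w : E} {δ : ℝ} (h : ‖w - u‖ ≤ δ) :
    ‖u‖ ^ 2 - ‖u‖ * δ ≤ ⟪u, w⟫ := by
  have hsplit : ⟪u, w⟫ = ‖u‖ ^ 2 + ⟪u, w - u⟫ := by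
    rw [inner_sub_right, real_inner_self_eq_norm_sq]
    ring
  have hcross : -(‖u‖ * δ) ≤ ⟪u, w - u⟫ :=
    calc -(‖u‖ * δ) ≤ -(‖u‖ * ‖w - u‖) := by gcongr
      _ ≤ ⟪u, w - u⟫ := neg_le_of_abs_le (abs_real_inner_le_norm _ _)
  linarith

variable [CompleteSpace E]

lemma apply_add_le_of_lipschitzWith_gradient {L : E → ℝ} {g : E → E}
    (hg : ∀ x, HasGradientAt L (g x) x) {C : NNReal} (hLip : LipschitzWith C g) (x v : E) :
    L (x + v) ≤ L x + ⟪g x, v⟫ + C / 2 * ‖v‖ ^ 2 := by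
  have hline : ∀ t : ℝ, HasDerivAt (fun t : ℝ => L (x + t • v)) ⟪g (x + t • v), v⟫ t := by
    intro t
    have hpath : HasDerivAt (fun t : ℝ => x + t • v) v t := by
      simpa using ((hasDerivAt_id t).smul_const v).const_add x
    simpa [InnerProductSpace.toDual_apply_apply, Function.comp_def] using
      (hg (x + t • v)).hasFDerivAt.comp_hasDerivAt t hpath
  have hslope : ∀ t ∈ Ico (0 : ℝ) 1,
      ⟪g (x + t • v), v⟫ ≤ ⟪g (x + (0 : ℝ) • v), v⟫ + C * ‖v‖ ^ 2 * t := by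
    rintro t ⟨ht, -⟩
    have hgrowth : ⟪g (x + t • v) - g x, v⟫ ≤ C * ‖v‖ ^ 2 * t :=
      calc ⟪g (x + t • v) - g x, v⟫ ≤ ‖g (x + t • v) - g x‖ * ‖v‖ := real_inner_le_norm _ _
        _ ≤ C * ‖(x + t • v) - x‖ * ‖v‖ := by gcongr; exact hLip.norm_sub_le _ _
        _ = C * ‖v‖ ^ 2 * t := by
          rw [add_sub_cancel_left, norm_smul, Real.norm_of_nonneg ht]
          ring
    rw [inner_sub_left] at hgrowth
    rw [zero_smul, add_zero]
    linarith
  have := image_le_add_deriv_mul_add_sq_of_deriv_le zero_le_one hline hslope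
  simp only [zero_smul, add_zero, one_smul, mul_one, one_pow] at this
  linarith

lemma apply_sub_smul_le_of_norm_sub_gradient_le {L : E → ℝ} {g : E → E}
    (hg : ∀ x, HasGradientAt L (g x) x) {C : NNReal} (hLip : LipschitzWith C g)
    {x s : E} {η : ℝ} (hη0 : 0 ≤ η) (hηC : C * η ≤ 8 / 25) (hs : ‖s - g x‖ ≤ ‖g x‖ / 4) :
    L (x - η • s) ≤ L x - η / 2 * ‖g x‖ ^ 2 := by
  set G := ‖g x‖
  have hinner : 3 / 4 * G ^ 2 ≤ ⟪g x, s⟫ := by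
    have := sq_norm_sub_mul_le_inner_of_norm_sub_le hs
    linarith
  have hnorm : ‖s‖ ≤ 5 / 4 * G := by
    linarith [norm_le_norm_add_norm_sub' s (g x)]
  have hquad : C / 2 * ‖-η • s‖ ^ 2 ≤ η / 4 * G ^ 2 :=
    calc C / 2 * ‖-η • s‖ ^ 2 = 1 / 2 * (C * η) * η * ‖s‖ ^ 2 := by
          rw [norm_smul, Real.norm_eq_abs, abs_neg, abs_of_nonneg hη0]
          ring
      _ ≤ 1 / 2 * (8 / 25) * η * (5 / 4 * G) ^ 2 := by gcongr
      _ = η / 4 * G ^ 2 := by ring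
  have hdescent := apply_add_le_of_lipschitzWith_gradient hg hLip x (-η • s)
  rw [real_inner_smul_right] at hdescent
  have hstep := mul_le_mul_of_nonneg_left hinner hη0
  rw [sub_eq_add_neg, ← neg_smul]
  linarith

end Gradient

theorem surrogate_loss_converges_general
    {E : Type*} [NormedAddCommGroup E] [InnerProductSpace ℝ E] [CompleteSpace E]
    (L : E → ℝ) (g : E → E) (hg : ∀ x : E, HasGradientAt L (g x) x)
    (C : NNReal) (hLip : LipschitzWith C g)
    (B : ℝ) (hB : ∀ x : E, B ≤ L x)
    (θ s : ℕ → E) (η ε : ℕ → ℝ)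
    (hθ : ∀ t : ℕ, θ (t + 1) = θ t - η t • s t)
    (hs : ∀ t : ℕ, ‖s t - g (θ t)‖ ≤ ε t)
    (hε : ∀ t : ℕ, ε t ≤ ‖g (θ t)‖ / 4)
    (hη0 : ∀ t : ℕ, 0 ≤ η t) (hη : ∀ t : ℕ, η t ≤ 8 / (25 * (C : ℝ))) :
    (∀ t : ℕ, L (θ (t + 1)) ≤ L (θ t)) ∧
      ∃ lstar : ℝ, Filter.Tendsto (fun t : ℕ => L (θ t)) Filter.atTop (nhds lstar) := by
  have hdecrease : ∀ t, L (θ (t + 1)) ≤ L (θ t) := by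
    intro t
    have hηC : (C : ℝ) * η t ≤ 8 / 25 := by
      have := mul_le_of_le_div₀ (by norm_num) (by positivity) (hη t)
      linarith
    have hsufficient :=
      apply_sub_smul_le_of_norm_sub_gradient_le hg hLip (hη0 t) hηC ((hs t).trans (hε t))
    rw [hθ t]
    exact hsufficient.trans (sub_le_self _ (mul_nonneg (div_nonneg (hη0 t) zero_le_two) (sq_nonneg _)))
  have hbdd : BddBelow (range fun t => L (θ t)) := ⟨B, by rintro _ ⟨t, rfl⟩; exact hB _⟩
  exact ⟨hdecrease, _, tendsto_atTop_ciInf (antitone_nat_of_succ_le hdecrease) hbdd⟩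

/-- Theorem 2, monotone decrease and convergence of the loss. -/
theorem surrogate_loss_converges
    {E : Type*} [NormedAddCommGroup E] [InnerProductSpace ℝ E] [CompleteSpace E]
    (L : E → ℝ) (g : E → E) (hg : ∀ x : E, HasGradientAt L (g x) x)
    (C : NNReal) (hLip : LipschitzWith C g) (hC : 0 < (C : ℝ))
    (B : ℝ) (hB : ∀ x : E, B ≤ L x)
    (θ s : ℕ → E) (η ε : ℕ → ℝ)
    (hθ : ∀ t : ℕ, θ (t + 1) = θ t - η t • s t)
    (hs : ∀ t : ℕ, ‖s t - g (θ t)‖ ≤ ε t)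
    (hε0 : ∀ t : ℕ, 0 ≤ ε t) (hε : ∀ t : ℕ, ε t ≤ ‖g (θ t)‖ / 4)
    (hη0 : ∀ t : ℕ, 0 ≤ η t) (hη : ∀ t : ℕ, η t ≤ 8 / (25 * (C : ℝ))) :
    (∀ t : ℕ, L (θ (t + 1)) ≤ L (θ t)) ∧
      ∃ lstar : ℝ, Filter.Tendsto (fun t : ℕ => L (θ t)) Filter.atTop (nhds lstar) :=
  surrogate_loss_converges_general L g hg C hLip B hB θ s η ε hθ hs hε hη0 hη
end
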